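/- arXiv:2405.10926 — 5 statements merged into one kernel-verified Lean document; each statement's English description precedes it below -/
import Mathlib

section
/- If f ∈ ℚ_p[x] is pure at p of slope s with |s| < r, and g ∈ ℤ_p[x] is p^r-pure, then the composition f ∘ g is pure at p of slope s/deg(g). In particular, its Newton polygon is a single segment from (0, ord_p(f(g(0)))) to (deg(f)·deg(g), 0) where ord_p(f(g(0))) = ord_p(f(0)) (when f is monic scaled appropriately). -/
/-- The lower convex hull of a set of points in `ℝ × (ℝ ∪ {∞})`: the points lying
within the vertical strip spanned by `S` and on or above every affine lower bound of `S`. -/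
def LCH (S : Set (ℝ × EReal)) : Set (ℝ × EReal) :=
  {q | (∃ s ∈ S, s.1 ≤ q.1) ∧ (∃ s ∈ S, q.1 ≤ s.1) ∧
    ∀ a b : ℝ, (∀ s ∈ S, ((a * s.1 + b : ℝ) : EReal) ≤ s.2) →
      ((a * q.1 + b : ℝ) : EReal) ≤ q.2}
open Polynomial

/- The `p`-adic valuation of an element of `ℚ_[p]`, with `ord_p 0 = ∞`. -/
open Classical in
noncomputable def ordp (p : ℕ) [Fact p.Prime] (x : ℚ_[p]) : EReal :=
  if x = 0 then ⊤ else ((x.valuation : ℝ) : EReal)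

/-- The points `(i, ord_p a_i)` attached to a polynomial `f = Σ a_i x^i` over `ℚ_[p]`. -/
def NPpts {p : ℕ} [Fact p.Prime] (f : Polynomial ℚ_[p]) : Set (ℝ × EReal) :=
  {q | ∃ i : ℕ, i ≤ f.natDegree ∧ q = ((i : ℝ), ordp p (f.coeff i))}

/-- The `p`-adic Newton polygon of `f`, as a region in the plane. -/
noncomputable def NP {p : ℕ} [Fact p.Prime] (f : Polynomial ℚ_[p]) : Set (ℝ × EReal) :=
  LCH (NPpts f)

/-- `f` is pure at `p` of slope `s`: its Newton polygon is the single segment from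
`(0, ord_p a_0)` to `(natDegree f, ord_p a_0 + s · natDegree f)`. -/
def IsPure {p : ℕ} [Fact p.Prime] (f : Polynomial ℚ_[p]) (s : ℝ) : Prop :=
  f.coeff 0 ≠ 0 ∧
  (∀ i ≤ f.natDegree,
    ((((f.coeff 0).valuation : ℝ) + s * i : ℝ) : EReal) ≤ ordp p (f.coeff i)) ∧
  ordp p (f.coeff f.natDegree)
    = ((((f.coeff 0).valuation : ℝ) + s * f.natDegree : ℝ) : EReal)

/-- `f` is `p^r`-pure: one segment, `ord_p a_0 = r` and `ord_p a_n = 0`. -/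
def IsPrPure {p : ℕ} [Fact p.Prime] (f : Polynomial ℚ_[p]) (r : ℕ) : Prop :=
  1 ≤ f.natDegree ∧ (f.coeff 0).valuation = (r : ℤ) ∧
  IsPure f (-(r : ℝ) / f.natDegree)

section Helpers
variable {p : ℕ} [Fact p.Prime]

lemma one_lt_pR : (1 : ℝ) < p := by exact_mod_cast (Fact.out : p.Prime).one_lt

lemma ordp_le_iff (x : ℚ_[p]) (c : ℝ) :
    ((c : ℝ) : EReal) ≤ ordp p x ↔ ‖x‖ ≤ (p : ℝ) ^ (-c) := by
  have hp1 : (1 : ℝ) < p := one_lt_pR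
  by_cases hx : x = 0
  · simp [ordp, hx, le_of_lt (Real.rpow_pos_of_pos (by linarith) _)]
  · rw [ordp, if_neg hx, EReal.coe_le_coe_iff, Padic.norm_eq_zpow_neg_valuation hx,
      ← Real.rpow_intCast _ (-x.valuation), Real.rpow_le_rpow_left_iff hp1]
    push_cast
    constructor <;> intro h <;> linarith

lemma val_eq_of_norm_eq {x y : ℚ_[p]} (hx : x ≠ 0) (hy : y ≠ 0) (h : ‖x‖ = ‖y‖) :
    x.valuation = y.valuation := by
  have hp1 : (1 : ℝ) < p := one_lt_pR
  rw [Padic.norm_eq_zpow_neg_valuation hx, Padic.norm_eq_zpow_neg_valuation hy] at h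
  have := zpow_right_injective₀ (by linarith : (0:ℝ) < p) (by linarith : (p:ℝ) ≠ 1) h
  omega

lemma pow_coeff_bound {g : Polynomial ℚ_[p]} {ρ c : ℝ}
    (hgc : ∀ j, ‖g.coeff j‖ ≤ (p : ℝ) ^ (ρ * j - c)) (i k : ℕ) :
    ‖(g ^ i).coeff k‖ ≤ (p : ℝ) ^ (ρ * k - c * i) := by
  have hp0 : (0 : ℝ) < p := by have := one_lt_pR (p := p); linarith
  induction i generalizing k with
  | zero =>
    rcases Nat.eq_zero_or_pos k with hk | hk
    · subst hk; simp [Real.rpow_natCast]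
    · rw [pow_zero, Polynomial.coeff_one, if_neg (by omega)]
      simp [le_of_lt (Real.rpow_pos_of_pos hp0 _)]
  | succ i ih =>
    rw [pow_succ', Polynomial.coeff_mul]
    push_cast
    apply IsUltrametricDist.norm_sum_le_of_forall_le_of_nonneg
      (le_of_lt (Real.rpow_pos_of_pos hp0 _))
    rintro ⟨a, b⟩ hab
    have hab' : a + b = k := Finset.HasAntidiagonal.mem_antidiagonal.mp hab
    calc ‖g.coeff a * (g ^ i).coeff b‖ = ‖g.coeff a‖ * ‖(g ^ i).coeff b‖ := norm_mul _ _
      _ ≤ (p : ℝ) ^ (ρ * a - c) * (p : ℝ) ^ (ρ * b - c * i) :=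
        mul_le_mul (hgc a) (ih b) (norm_nonneg _) (le_of_lt (Real.rpow_pos_of_pos hp0 _))
      _ = (p : ℝ) ^ (ρ * k - c * (i + 1)) := by
        rw [← Real.rpow_add hp0]; congr 1; push_cast [← hab']; ring

end Helpers

/-- If `f` is pure at `p` of slope `s` with `|s| < r` and `g ∈ ℤ_p[x]` is `p^r`-pure, then
`f ∘ g` is pure at `p` of slope `s / deg g`; moreover the constant coefficient of `f ∘ g`
has the same `p`-adic valuation as that of `f`. -/
theorem comp_pure (p : ℕ) [Fact p.Prime] (r : ℕ) (hr : 1 ≤ r)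
    (f g : Polynomial ℚ_[p]) (s : ℝ)
    (hf : IsPure f s) (hs : |s| < r)
    (hgint : ∀ i, ‖g.coeff i‖ ≤ 1) (hg : IsPrPure g r) :
    IsPure (f.comp g) (s / g.natDegree) ∧
      ordp p ((f.comp g).coeff 0) = ((((f.coeff 0).valuation : ℝ) : ℝ) : EReal) := by
  obtain ⟨hf0, hflow, hftop⟩ := hf
  obtain ⟨hm, hgval0, hg0, hglow, hgtop⟩ := hg
  set n := f.natDegree with hn
  set m := g.natDegree with hmdef
  have hp1 : (1 : ℝ) < p := one_lt_pR
  have hp0 : (0 : ℝ) < p := by linarith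
  have hm0 : (0 : ℝ) < m := by exact_mod_cast hm
  have hmne : (m : ℝ) ≠ 0 := ne_of_gt hm0
  have hsr : 0 < s + r := by have := abs_lt.mp hs; linarith [this.1]
  set v0 : ℝ := ((f.coeff 0).valuation : ℝ) with hv0
  -- g coefficient bound
  have hgc : ∀ j : ℕ, ‖g.coeff j‖ ≤ (p : ℝ) ^ ((r / m : ℝ) * j - r) := by
    intro j
    rcases le_or_gt j m with hj | hj
    · have h2 := (ordp_le_iff (g.coeff j) _).mp (hglow j hj)
      calc ‖g.coeff j‖ ≤ (p:ℝ) ^ (-(((g.coeff 0).valuation : ℝ) + (-(r:ℝ)/m) * j)) := h2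
        _ = (p:ℝ) ^ ((r/m : ℝ) * j - r) := by
            congr 1; rw [hgval0]; push_cast; ring
    · rw [Polynomial.coeff_eq_zero_of_natDegree_lt hj, norm_zero]
      exact le_of_lt (Real.rpow_pos_of_pos hp0 _)
  have hd : ∀ i k : ℕ, ‖(g ^ i).coeff k‖ ≤ (p:ℝ) ^ ((r/m : ℝ) * k - r * i) :=
    pow_coeff_bound hgc
  have ha : ∀ i ≤ n, ‖f.coeff i‖ ≤ (p:ℝ) ^ (-(v0 + s * i)) := fun i hi =>
    (ordp_le_iff _ _).mp (hflow i hi)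
  -- comp coefficient formula
  have hcoeff : ∀ k, (f.comp g).coeff k
      = ∑ i ∈ Finset.range (n + 1), f.coeff i * (g ^ i).coeff k := by
    intro k
    conv_lhs => rw [Polynomial.comp_eq_sum_left]
    rw [Polynomial.sum_over_range' f (by simp) (n+1) (Nat.lt_succ_self _),
      Polynomial.finset_sum_coeff]
    simp [Polynomial.coeff_C_mul]
  -- main Newton-polygon lower bound
  have hmain : ∀ k : ℕ, ‖(f.comp g).coeff k‖ ≤ (p:ℝ) ^ (-(v0 + s / m * k)) := by
    intro k
    rw [hcoeff k]
    apply IsUltrametricDist.norm_sum_le_of_forall_le_of_nonneg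
      (le_of_lt (Real.rpow_pos_of_pos hp0 _))
    intro i hi
    have hi' : i ≤ n := Nat.lt_succ_iff.mp (Finset.mem_range.mp hi)
    rcases le_or_gt k (i * m) with hk | hk
    · calc ‖f.coeff i * (g^i).coeff k‖ = ‖f.coeff i‖ * ‖(g^i).coeff k‖ := norm_mul _ _
        _ ≤ (p:ℝ) ^ (-(v0 + s*i)) * (p:ℝ) ^ ((r/m:ℝ)*k - r*i) :=
          mul_le_mul (ha i hi') (hd i k) (norm_nonneg _)
            (le_of_lt (Real.rpow_pos_of_pos hp0 _))
        _ = (p:ℝ) ^ (-(v0 + s*i) + ((r/m:ℝ)*k - r*i)) := (Real.rpow_add hp0 _ _).symm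
        _ ≤ (p:ℝ) ^ (-(v0 + s / m * k)) := by
          rw [Real.rpow_le_rpow_left_iff hp1]
          have hk' : (k : ℝ) ≤ (i : ℝ) * m := by exact_mod_cast hk
          have key : ((s+r)/m) * k ≤ (s+r) * i := by
            rw [div_mul_eq_mul_div, div_le_iff₀ hm0]; nlinarith
          have e : ((s+r)/m) * k = (s/m) * k + (r/m) * k := by ring
          have e2 : (s / m * k : ℝ) = (s/m) * k := by ring
          linarith
    · have hz : (g^i).natDegree < k := lt_of_le_of_lt Polynomial.natDegree_pow_le hk
      rw [Polynomial.coeff_eq_zero_of_natDegree_lt hz, mul_zero, norm_zero]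
      exact le_of_lt (Real.rpow_pos_of_pos hp0 _)
  -- constant coefficient
  have ha0norm : ‖f.coeff 0‖ = (p:ℝ) ^ (-v0) := by
    rw [Padic.norm_eq_zpow_neg_valuation hf0, ← Real.rpow_intCast]
    congr 1; push_cast; ring
  have hT : ‖∑ i ∈ Finset.range n, f.coeff (i+1) * (g^(i+1)).coeff 0‖
      ≤ (p:ℝ) ^ (-(v0 + (s + r))) := by
    apply IsUltrametricDist.norm_sum_le_of_forall_le_of_nonneg
      (le_of_lt (Real.rpow_pos_of_pos hp0 _))
    intro i hi
    have hi' : i + 1 ≤ n := Finset.mem_range.mp hi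
    calc ‖f.coeff (i+1) * (g^(i+1)).coeff 0‖
        = ‖f.coeff (i+1)‖ * ‖(g^(i+1)).coeff 0‖ := norm_mul _ _
      _ ≤ (p:ℝ) ^ (-(v0 + s*((i+1:ℕ):ℝ))) * (p:ℝ) ^ ((r/m:ℝ)*((0:ℕ):ℝ) - r*((i+1:ℕ):ℝ)) :=
          mul_le_mul (ha _ hi') (hd (i+1) 0) (norm_nonneg _)
            (le_of_lt (Real.rpow_pos_of_pos hp0 _))
      _ = (p:ℝ) ^ (-(v0 + s*((i+1:ℕ):ℝ)) + ((r/m:ℝ)*((0:ℕ):ℝ) - r*((i+1:ℕ):ℝ))) :=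
          (Real.rpow_add hp0 _ _).symm
      _ ≤ (p:ℝ) ^ (-(v0 + (s + r))) := by
          rw [Real.rpow_le_rpow_left_iff hp1]
          push_cast
          nlinarith [hsr]
  have hTlt : ‖∑ i ∈ Finset.range n, f.coeff (i+1) * (g^(i+1)).coeff 0‖ < ‖f.coeff 0‖ := by
    rw [ha0norm]
    exact lt_of_le_of_lt hT (by rw [Real.rpow_lt_rpow_left_iff hp1]; linarith)
  have hc0 : (f.comp g).coeff 0
      = (∑ i ∈ Finset.range n, f.coeff (i+1) * (g^(i+1)).coeff 0) + f.coeff 0 := by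
    rw [hcoeff 0, Finset.sum_range_succ', pow_zero, Polynomial.coeff_one, if_pos rfl, mul_one]
  have hc0norm : ‖(f.comp g).coeff 0‖ = ‖f.coeff 0‖ := by
    rw [hc0, Padic.add_eq_max_of_ne (ne_of_lt hTlt), max_eq_right (le_of_lt hTlt)]
  have hc0ne : (f.comp g).coeff 0 ≠ 0 := by
    intro h; rw [h, norm_zero] at hc0norm
    exact hf0 (norm_eq_zero.mp hc0norm.symm)
  have hc0val : ((f.comp g).coeff 0).valuation = (f.coeff 0).valuation :=
    val_eq_of_norm_eq hc0ne hf0 hc0norm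
  -- degree and top coefficient
  have hndeg : (f.comp g).natDegree = n * m := Polynomial.natDegree_comp
  have hbm_ne : g.coeff m ≠ 0 := by
    intro h; rw [ordp, if_pos h] at hgtop; exact EReal.top_ne_coe _ hgtop
  have hbmval : ((g.coeff m).valuation : ℝ) = 0 := by
    rw [ordp, if_neg hbm_ne] at hgtop
    have h2 : ((g.coeff m).valuation : ℝ)
        = ((g.coeff 0).valuation : ℝ) + -(r:ℝ)/m * m := EReal.coe_eq_coe_iff.mp hgtop
    rw [hgval0, div_mul_cancel₀ _ hmne] at h2
    push_cast at h2 ⊢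
    linarith
  have han_ne : f.coeff n ≠ 0 := by
    intro h; rw [ordp, if_pos h] at hftop; exact EReal.top_ne_coe _ hftop
  have hanval : ((f.coeff n).valuation : ℝ) = v0 + s * n := by
    rw [ordp, if_neg han_ne] at hftop
    exact EReal.coe_eq_coe_iff.mp hftop
  have hbmnorm : ‖g.coeff m‖ = 1 := by
    rw [Padic.norm_eq_zpow_neg_valuation hbm_ne]
    have : (g.coeff m).valuation = 0 := by exact_mod_cast hbmval
    rw [this]; simp
  have htopcoeff : (f.comp g).coeff (n*m) = f.coeff n * (g.coeff m)^n := by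
    have h3 := Polynomial.coeff_comp_degree_mul_degree (p := f) (q := g)
      (by omega : g.natDegree ≠ 0)
    exact h3
  have htopne : (f.comp g).coeff (n*m) ≠ 0 := by
    rw [htopcoeff]; exact mul_ne_zero han_ne (pow_ne_zero _ hbm_ne)
  have htopnorm : ‖(f.comp g).coeff (n*m)‖ = ‖f.coeff n‖ := by
    rw [htopcoeff, norm_mul, norm_pow, hbmnorm, one_pow, mul_one]
  have htopval : ((f.comp g).coeff (n*m)).valuation = (f.coeff n).valuation :=
    val_eq_of_norm_eq htopne han_ne htopnorm
  refine ⟨⟨hc0ne, ?_, ?_⟩, ?_⟩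
  · intro i hi
    rw [hc0val]
    exact (ordp_le_iff _ _).mpr (hmain i)
  · rw [hndeg, hc0val, ordp, if_neg htopne, htopval, EReal.coe_eq_coe_iff, hanval]
    push_cast
    field_simp
    ring
  · rw [ordp, if_neg hc0ne, hc0val]
end

section
/- Suppose the p-adic Newton polygon of f ∈ ℚ_p[x] consists of N segments with slopes s_1 < ⋯ < s_N, and suppose g ∈ ℤ_p[x] is p^r-pure of degree d with |s_i| < r for all i. Then the Newton polygon of f ∘ g has exactly N segments, with slopes s_1/d < ⋯ < s_N/d. Moreover, if the vertices of NP_p(f) are (i_j, m_j) for 0 ≤ j ≤ N, then the vertices of NP_p(f ∘ g) are (d·i_j, m_j). -/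
open Polynomial

/-- The Newton polygon of `f` has exactly `N` segments, with vertices `(x j, y j)`:
the `x j` are strictly increasing from `0` to `deg f`, the valuations of the coefficients
at the vertices are the `y j`, the consecutive slopes are strictly increasing, and all
points `(i, ord_p a_i)` lie on or above the segment through the neighbouring vertices. -/
def HasNPVertices {p : ℕ} [Fact p.Prime] (f : Polynomial ℚ_[p]) (N : ℕ)
    (x : Fin (N + 1) → ℕ) (y : Fin (N + 1) → ℝ) : Prop :=
  x 0 = 0 ∧ x (Fin.last N) = f.natDegree ∧
  (∀ j : Fin N, x j.castSucc < x j.succ) ∧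
  StrictMono (fun j : Fin N =>
    (y j.succ - y j.castSucc) / ((x j.succ : ℝ) - (x j.castSucc : ℝ))) ∧
  (∀ j : Fin (N + 1), ordp p (f.coeff (x j)) = ((y j : ℝ) : EReal)) ∧
  (∀ j : Fin N, ∀ i : ℕ, x j.castSucc ≤ i → i ≤ x j.succ →
    (((y j.castSucc +
        (y j.succ - y j.castSucc) / ((x j.succ : ℝ) - (x j.castSucc : ℝ))
          * ((i : ℝ) - (x j.castSucc : ℝ))) : ℝ) : EReal) ≤ ordp p (f.coeff i))


/-! Write `(f ∘ g)_m = ∑_k f_k (g^k)_m`. Purity of `g` gives `ord (g^k)_m ≥ k r - r m / d`, with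
equality `ord (g^k)_{dk} = 0` at the top coefficient, and `(g^k)_m = 0` for `m > dk`.
By convexity, every `f_k` with `k ≥ xⱼ` lies above the line of slope `sⱼ` through `(xⱼ, yⱼ)`.
Hence, for `k ≥ m / d`, the `k`-th term lies above the line of slope `sⱼ / d` through `(d xⱼ, yⱼ)`
by at least `(sⱼ + r)(k - m / d) ≥ 0`, since `sⱼ > -r`. At `m = d xⱼ` only the term `k = xⱼ`
attains `yⱼ`: smaller `k` contribute `0` and larger `k` lie strictly above. -/

open Finset

theorem IsUltrametricDist.norm_sum_lt_of_forall_lt {M ι : Type*} [SeminormedAddCommGroup M]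
    [IsUltrametricDist M] {s : Finset ι} {f : ι → M} {C : ℝ} (hC : 0 < C)
    (h : ∀ i ∈ s, ‖f i‖ < C) : ‖∑ i ∈ s, f i‖ < C := by
  rcases s.eq_empty_or_nonempty with rfl | hs
  · simpa using hC
  · have : Nonempty ι := ⟨hs.choose⟩
    obtain ⟨i, hi, hle⟩ := IsUltrametricDist.exists_norm_finsetSum_le s f
    exact hle.trans_lt (h i (hi hs))

section Valuation

variable {p : ℕ} [Fact p.Prime]

theorem ordp_zero : ordp p 0 = ⊤ := by simp [ordp]

theorem coe_le_ordp_iff {c : ℝ} {a : ℚ_[p]} : (c : EReal) ≤ ordp p a ↔ ‖a‖ ≤ (p : ℝ) ^ (-c) := by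
  have hp : (1 : ℝ) < p := Nat.one_lt_cast.mpr (Fact.out : p.Prime).one_lt
  unfold ordp
  split_ifs with ha
  · simp [ha, Real.rpow_nonneg]
  · rw [EReal.coe_le_coe_iff, Padic.norm_eq_zpow_neg_valuation ha, ← Real.rpow_intCast,
      Real.rpow_le_rpow_left_iff hp, Int.cast_neg, neg_le_neg_iff]

theorem coe_lt_ordp_iff {c : ℝ} {a : ℚ_[p]} : (c : EReal) < ordp p a ↔ ‖a‖ < (p : ℝ) ^ (-c) := by
  have hp : (1 : ℝ) < p := Nat.one_lt_cast.mpr (Fact.out : p.Prime).one_lt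
  unfold ordp
  split_ifs with ha
  · simp [ha, Real.rpow_pos_of_pos (zero_lt_one.trans hp)]
  · rw [EReal.coe_lt_coe_iff, Padic.norm_eq_zpow_neg_valuation ha, ← Real.rpow_intCast,
      Real.rpow_lt_rpow_left_iff hp, Int.cast_neg, neg_lt_neg_iff]

theorem ordp_eq_coe_iff {c : ℝ} {a : ℚ_[p]} : ordp p a = c ↔ ‖a‖ = (p : ℝ) ^ (-c) := by
  rw [le_antisymm_iff, le_antisymm_iff, coe_le_ordp_iff, ← not_lt, coe_lt_ordp_iff, not_lt,
    and_comm]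

theorem coe_add_le_ordp_mul {a b : ℚ_[p]} {c₁ c₂ : ℝ} (ha : (c₁ : EReal) ≤ ordp p a)
    (hb : (c₂ : EReal) ≤ ordp p b) : ((c₁ + c₂ : ℝ) : EReal) ≤ ordp p (a * b) := by
  have hp : (0 : ℝ) < p := Nat.cast_pos.mpr (Fact.out : p.Prime).pos
  rw [coe_le_ordp_iff] at *
  rw [norm_mul, neg_add, Real.rpow_add hp]
  exact mul_le_mul ha hb (norm_nonneg _) (Real.rpow_nonneg hp.le _)

theorem coe_add_lt_ordp_mul {a b : ℚ_[p]} {c₁ c₂ : ℝ} (ha : (c₁ : EReal) < ordp p a)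
    (hb : (c₂ : EReal) ≤ ordp p b) : ((c₁ + c₂ : ℝ) : EReal) < ordp p (a * b) := by
  have hp : (0 : ℝ) < p := Nat.cast_pos.mpr (Fact.out : p.Prime).pos
  rw [coe_lt_ordp_iff] at *
  rw [coe_le_ordp_iff] at hb
  rw [norm_mul, neg_add, Real.rpow_add hp]
  exact mul_lt_mul_of_lt_of_le_of_nonneg_of_pos ha hb (norm_nonneg _) (Real.rpow_pos_of_pos hp _)

theorem coe_le_ordp_sum {ι : Type*} {s : Finset ι} {f : ι → ℚ_[p]} {c : ℝ}
    (h : ∀ i ∈ s, (c : EReal) ≤ ordp p (f i)) : (c : EReal) ≤ ordp p (∑ i ∈ s, f i) := by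
  simp only [coe_le_ordp_iff] at *
  exact IsUltrametricDist.norm_sum_le_of_forall_le_of_nonneg
    (Real.rpow_nonneg (Nat.cast_nonneg p) _) h

theorem coe_lt_ordp_sum {ι : Type*} {s : Finset ι} {f : ι → ℚ_[p]} {c : ℝ}
    (h : ∀ i ∈ s, (c : EReal) < ordp p (f i)) : (c : EReal) < ordp p (∑ i ∈ s, f i) := by
  simp only [coe_lt_ordp_iff] at *
  exact IsUltrametricDist.norm_sum_lt_of_forall_lt
    (Real.rpow_pos_of_pos (Nat.cast_pos.mpr (Fact.out : p.Prime).pos) _) h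

theorem ordp_add_eq_of_lt {a b : ℚ_[p]} {c : ℝ} (ha : ordp p a = c)
    (hb : (c : EReal) < ordp p b) : ordp p (a + b) = c := by
  rw [ordp_eq_coe_iff] at *
  rw [coe_lt_ordp_iff, ← ha] at hb
  rw [Padic.add_eq_max_of_ne hb.ne', max_eq_left hb.le, ha]

end Valuation

section Polynomial

theorem Polynomial.coeff_comp_eq_sum {R : Type*} [Semiring R] (f g : R[X]) (m : ℕ) :
    (f.comp g).coeff m = ∑ k ∈ range (f.natDegree + 1), f.coeff k * (g ^ k).coeff m := by
  rw [comp, eval₂_eq_sum_range, finsetSum_coeff]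
  simp only [coeff_C_mul]

theorem Polynomial.coeff_pow_eq_zero_of_lt {R : Type*} [Semiring R] {g : R[X]} {k m : ℕ}
    (h : g.natDegree * k < m) : (g ^ k).coeff m = 0 :=
  coeff_eq_zero_of_natDegree_lt (natDegree_pow_le.trans_lt (by rwa [mul_comm]))

variable {p : ℕ} [Fact p.Prime]

theorem le_ordp_coeff_mul {f g : ℚ_[p][X]} {a₁ a₂ b : ℝ}
    (hf : ∀ i : ℕ, ((a₁ + b * i : ℝ) : EReal) ≤ ordp p (f.coeff i))
    (hg : ∀ i : ℕ, ((a₂ + b * i : ℝ) : EReal) ≤ ordp p (g.coeff i)) (m : ℕ) :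
    ((a₁ + a₂ + b * m : ℝ) : EReal) ≤ ordp p ((f * g).coeff m) := by
  rw [coeff_mul]
  refine coe_le_ordp_sum fun q hq => ?_
  have hm : (q.1 : ℝ) + q.2 = m := by exact_mod_cast mem_antidiagonal.mp hq
  convert coe_add_le_ordp_mul (hf q.1) (hg q.2) using 2
  rw [← hm]
  ring

theorem le_ordp_coeff_pow {g : ℚ_[p][X]} {a b : ℝ}
    (hg : ∀ i : ℕ, ((a + b * i : ℝ) : EReal) ≤ ordp p (g.coeff i)) (k m : ℕ) :
    ((k * a + b * m : ℝ) : EReal) ≤ ordp p ((g ^ k).coeff m) := by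
  induction k generalizing m with
  | zero =>
    rw [pow_zero, coeff_one]
    split_ifs with hm
    · subst hm; simp [ordp]
    · simp [ordp_zero]
  | succ k ih =>
    rw [pow_succ]
    convert le_ordp_coeff_mul ih hg m using 3
    push_cast
    ring

end Polynomial

section Stretch

variable {p : ℕ} [Fact p.Prime] {r : ℕ} {f g : ℚ_[p][X]}

theorem IsPrPure.le_ordp_coeff (hg : IsPrPure g r) (i : ℕ) :
    (((r : ℝ) + -(r : ℝ) / g.natDegree * i : ℝ) : EReal) ≤ ordp p (g.coeff i) := by
  obtain ⟨-, hval, -, hpure, -⟩ := hg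
  by_cases hi : i ≤ g.natDegree
  · simpa [hval] using hpure i hi
  · rw [coeff_eq_zero_of_natDegree_lt (not_le.mp hi), ordp_zero]
    exact le_top

theorem IsPrPure.norm_leadingCoeff (hg : IsPrPure g r) : ‖g.leadingCoeff‖ = 1 := by
  obtain ⟨hd, hval, -, -, hlead⟩ := hg
  replace hd : (g.natDegree : ℝ) ≠ 0 := Nat.cast_ne_zero.mpr (by omega)
  have hzero : ((g.coeff 0).valuation : ℝ) + -(r : ℝ) / g.natDegree * g.natDegree = 0 := by
    rw [hval, div_mul_cancel₀ _ hd]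
    push_cast
    ring
  rw [hzero] at hlead
  simpa using ordp_eq_coe_iff.mp hlead

theorem IsPrPure.le_ordp_coeff_comp (hg : IsPrPure g r) {x₀ : ℕ} {y₀ s : ℝ} (hs : -(r : ℝ) ≤ s)
    (hf : ∀ k, x₀ ≤ k → ((y₀ + s * (k - x₀) : ℝ) : EReal) ≤ ordp p (f.coeff k))
    {m : ℕ} (hm : g.natDegree * x₀ ≤ m) :
    ((y₀ + s / g.natDegree * (m - (g.natDegree * x₀ : ℕ)) : ℝ) : EReal)
      ≤ ordp p ((f.comp g).coeff m) := by
  have hd : (0 : ℝ) < g.natDegree := Nat.cast_pos.mpr hg.1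
  rw [coeff_comp_eq_sum]
  refine coe_le_ordp_sum fun k _ => ?_
  rcases lt_or_ge (g.natDegree * k) m with hkm | hkm
  · rw [coeff_pow_eq_zero_of_lt hkm, mul_zero, ordp_zero]
    exact le_top
  have hx₀k : x₀ ≤ k := Nat.le_of_mul_le_mul_left (hm.trans hkm) hg.1
  refine le_trans ?_ (coe_add_le_ordp_mul (hf k hx₀k) (le_ordp_coeff_pow hg.le_ordp_coeff k m))
  rw [EReal.coe_le_coe_iff]
  have hmk : (m : ℝ) / g.natDegree ≤ k := (div_le_iff₀' hd).mpr (by exact_mod_cast hkm)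
  have hexcess : y₀ + s * (k - x₀) + (k * r + -(r : ℝ) / g.natDegree * m)
      - (y₀ + s / g.natDegree * (m - (g.natDegree * x₀ : ℕ)))
      = (s + r) * (k - m / g.natDegree) := by
    push_cast
    field_simp
    ring
  linarith [mul_nonneg (neg_le_iff_add_nonneg.mp hs) (sub_nonneg.mpr hmk)]

theorem IsPrPure.ordp_coeff_comp_natDegree_mul (hg : IsPrPure g r) {x₀ : ℕ} {y₀ : ℝ}
    (hx₀ : ordp p (f.coeff x₀) = y₀)
    (hf : ∀ k, x₀ < k → ((y₀ - r * (k - x₀) : ℝ) : EReal) < ordp p (f.coeff k)) :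
    ordp p ((f.comp g).coeff (g.natDegree * x₀)) = y₀ := by
  have hd : (g.natDegree : ℝ) ≠ 0 := (Nat.cast_pos.mpr hg.1).ne'
  have hx₀f : x₀ ∈ range (f.natDegree + 1) := by
    refine mem_range_succ_iff.mpr (le_natDegree_of_ne_zero fun h0 => ?_)
    simp [h0, ordp_zero] at hx₀
  rw [coeff_comp_eq_sum, ← add_sum_erase _ _ hx₀f]
  refine ordp_add_eq_of_lt ?_ (coe_lt_ordp_sum fun k hk => ?_)
  · have hlead : ‖(g ^ x₀).coeff (g.natDegree * x₀)‖ = 1 := by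
      rw [mul_comm, ← natDegree_pow, coeff_natDegree, leadingCoeff_pow, norm_pow,
        hg.norm_leadingCoeff, one_pow]
    rw [ordp_eq_coe_iff, norm_mul, hlead, mul_one, ← ordp_eq_coe_iff, hx₀]
  rcases lt_or_gt_of_ne (ne_of_mem_erase hk) with hk | hk
  · rw [coeff_pow_eq_zero_of_lt (Nat.mul_lt_mul_of_pos_left hk hg.1), mul_zero, ordp_zero]
    exact EReal.coe_lt_top _
  convert coe_add_lt_ordp_mul (hf k hk)
    (le_ordp_coeff_pow hg.le_ordp_coeff k (g.natDegree * x₀)) using 2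
  push_cast
  field_simp
  ring

end Stretch

section NewtonPolygon

noncomputable def npSlope {N : ℕ} (x : Fin (N + 1) → ℕ) (y : Fin (N + 1) → ℝ) (j : Fin N) : ℝ :=
  (y j.succ - y j.castSucc) / ((x j.succ : ℝ) - (x j.castSucc : ℝ))

theorem npSlope_const_mul {N : ℕ} (x : Fin (N + 1) → ℕ) (y : Fin (N + 1) → ℝ) (d : ℕ) :
    npSlope (fun j => d * x j) y = fun j => npSlope x y j / d := by
  ext j
  unfold npSlope
  push_cast
  rw [← mul_sub, div_mul_eq_div_div_swap]

theorem add_slope_mul_le_of_slope_le {x₀ x₁ y₀ y₁ s t : ℝ} (hx : x₀ < x₁)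
    (hs : (y₁ - y₀) / (x₁ - x₀) ≤ s) (ht : x₁ ≤ t) :
    y₀ + (y₁ - y₀) / (x₁ - x₀) * (t - x₀) ≤ y₁ + s * (t - x₁) := by
  have hvertex : (y₁ - y₀) / (x₁ - x₀) * (x₁ - x₀) = y₁ - y₀ :=
    div_mul_cancel₀ _ (sub_pos.mpr hx).ne'
  nlinarith [mul_le_mul_of_nonneg_right hs (sub_nonneg.mpr ht)]

variable {p : ℕ} [Fact p.Prime] {f : ℚ_[p][X]} {N : ℕ} {x : Fin (N + 1) → ℕ}
  {y : Fin (N + 1) → ℝ}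

theorem HasNPVertices.le_ordp_coeff (hf : HasNPVertices f N x y) (j : Fin N) {k : ℕ}
    (hk : x j.castSucc ≤ k) :
    ((y j.castSucc + npSlope x y j * (k - x j.castSucc) : ℝ) : EReal) ≤ ordp p (f.coeff k) := by
  obtain ⟨-, hxN, hxlt, hmono, -, hseg⟩ := hf
  obtain ⟨M, rfl⟩ : ∃ M, N = M + 1 := ⟨N - 1, by have := j.isLt; omega⟩
  induction j using Fin.reverseInduction generalizing k with
  | last =>
    rcases le_or_gt k (x (Fin.last M).succ) with hk' | hk'
    · exact hseg _ k hk hk'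
    · rw [Fin.succ_last, hxN] at hk'
      rw [coeff_eq_zero_of_natDegree_lt hk', ordp_zero]
      exact le_top
  | cast j ih =>
    rcases le_or_gt k (x j.castSucc.succ) with hk' | hk'
    · exact hseg _ k hk hk'
    · refine le_trans ?_ (ih (Fin.succ_castSucc j ▸ hk'.le))
      rw [EReal.coe_le_coe_iff, ← Fin.succ_castSucc]
      exact add_slope_mul_le_of_slope_le (by exact_mod_cast hxlt _)
        (Fin.succ_castSucc j ▸ (hmono (Fin.castSucc_lt_succ (i := j))).le)
        (by exact_mod_cast hk'.le)

theorem HasNPVertices.sub_mul_lt_ordp_coeff (hf : HasNPVertices f N x y) {c : ℝ}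
    (hs : ∀ j, -c < npSlope x y j) (j : Fin (N + 1)) {k : ℕ} (hk : x j < k) :
    ((y j - c * (k - x j) : ℝ) : EReal) < ordp p (f.coeff k) := by
  cases j using Fin.lastCases with
  | last =>
    rw [coeff_eq_zero_of_natDegree_lt (hf.2.1 ▸ hk), ordp_zero]
    exact EReal.coe_lt_top _
  | cast j =>
    refine lt_of_lt_of_le ?_ (hf.le_ordp_coeff j hk.le)
    rw [EReal.coe_lt_coe_iff]
    have hkx : (x j.castSucc : ℝ) < k := by exact_mod_cast hk
    nlinarith [mul_lt_mul_of_pos_right (hs j) (sub_pos.mpr hkx)]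

end NewtonPolygon

theorem np_comp_stretch_general (p : ℕ) [Fact p.Prime] (r : ℕ)
    (f g : Polynomial ℚ_[p]) (N : ℕ)
    (x : Fin (N + 1) → ℕ) (y : Fin (N + 1) → ℝ)
    (hf : HasNPVertices f N x y)
    (hs : ∀ j : Fin N,
      |(y j.succ - y j.castSucc) / ((x j.succ : ℝ) - (x j.castSucc : ℝ))| < r)
    (hg : IsPrPure g r) :
    HasNPVertices (f.comp g) N (fun j => g.natDegree * x j) y := by
  have hslope : ∀ j, -(r : ℝ) < npSlope x y j := fun j => (abs_lt.mp (hs j)).1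
  have habove := hf.le_ordp_coeff
  have hstrict := hf.sub_mul_lt_ordp_coeff hslope
  obtain ⟨hx0, hxN, hxlt, hmono, hvert, -⟩ := hf
  refine ⟨by simp [hx0], by simp [hxN, natDegree_comp, mul_comm], fun j => ?_, ?_, fun j => ?_,
    fun j m hm _ => ?_⟩
  · exact Nat.mul_lt_mul_of_pos_left (hxlt j) hg.1
  · change StrictMono (npSlope (fun j => g.natDegree * x j) y)
    rw [npSlope_const_mul]
    exact hmono.div_const (Nat.cast_pos.mpr hg.1)
  · exact hg.ordp_coeff_comp_natDegree_mul (hvert j) fun _ => hstrict j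
  · change ((y j.castSucc + npSlope (fun j => g.natDegree * x j) y j
      * (m - (g.natDegree * x j.castSucc : ℕ)) : ℝ) : EReal) ≤ _
    simp only [npSlope_const_mul]
    exact hg.le_ordp_coeff_comp (hslope j).le (fun _ => habove j) hm

/-- Main theorem: if the Newton polygon of `f` has `N` segments with slopes `s_1 < ⋯ < s_N`
(vertices `(x j, y j)`), each satisfying `|s_j| < r`, and `g ∈ ℤ_p[x]` is `p^r`-pure of
degree `d`, then the Newton polygon of `f ∘ g` has exactly `N` segments, with vertices
`(d · x j, y j)` (hence slopes `s_1/d < ⋯ < s_N/d`). -/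
theorem np_comp_stretch (p : ℕ) [Fact p.Prime] (r : ℕ) (hr : 1 ≤ r)
    (f g : Polynomial ℚ_[p]) (N : ℕ) (hN : 1 ≤ N)
    (x : Fin (N + 1) → ℕ) (y : Fin (N + 1) → ℝ)
    (hf : HasNPVertices f N x y)
    (hs : ∀ j : Fin N,
      |(y j.succ - y j.castSucc) / ((x j.succ : ℝ) - (x j.castSucc : ℝ))| < r)
    (hgint : ∀ i, ‖g.coeff i‖ ≤ 1) (hg : IsPrPure g r) :
    HasNPVertices (f.comp g) N (fun j => g.natDegree * x j) y :=
  np_comp_stretch_general p r f g N x y hf hs hg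
end

section
/- If f ∈ ℚ[x] is p^r-Dumas, then every iterate f^{∘n} (n ≥ 1) is irreducible over ℚ; that is, f is dynamically irreducible. -/
open Polynomial

/-- `f ∈ ℚ[x]` is `p^r`-Dumas: its `p`-adic Newton polygon is a single segment from
`(0, r)` to `(deg f, 0)` (slope `-r/deg f`) and `gcd(r, deg f) = 1`. -/
def IsDumas (p r : ℕ) (f : Polynomial ℚ) : Prop :=
  1 ≤ f.natDegree ∧ Nat.Coprime r f.natDegree ∧
  f.coeff 0 ≠ 0 ∧ padicValRat p (f.coeff 0) = (r : ℤ) ∧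
  padicValRat p f.leadingCoeff = 0 ∧
  ∀ i ≤ f.natDegree, f.coeff i ≠ 0 →
    (r : ℝ) * (1 - (i : ℝ) / (f.natDegree : ℝ)) ≤ (padicValRat p (f.coeff i) : ℝ)

/-- The `n`-th iterate `f ∘ ⋯ ∘ f` of a polynomial (with `polyIter f 0 = X`). -/
noncomputable def polyIter {R : Type*} [CommSemiring R] (f : Polynomial R) : ℕ → Polynomial R
  | 0 => Polynomial.X
  | n + 1 => f.comp (polyIter f n)

/-!
Work in an algebraic closure `L` of `ℚ_p`. If `‖f(0)‖ = ρ^d`, `‖lead f‖ = 1` and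
`‖aᵢ‖ ≤ ρ^(d-i)`, then every root of `f` in `L` has norm `ρ`: a root of larger norm would make
the leading term strictly dominant, a root of smaller norm the constant term. For a `p^r`-Dumas
`f` of degree `d ≥ 2` this gives `‖β‖^d = p^(-r)` for its roots. If `β` is a root of
`f^{∘(n+1)} = f^{∘n} ∘ f`, then `α = f(β)` is a root of `f^{∘n}` with `‖α‖ = p^(-r/dⁿ) > ‖f(0)‖`,
so `f - α` satisfies the same hypotheses with `ρ^d = ‖α‖`; by induction all roots of `f^{∘n}`
have norm `p^(-r/dⁿ)`. A monic rational factor of `f^{∘n}` of degree `m` then has constant term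
of norm `p^(-rm/dⁿ)`, which must be an integral power of `p`; since `gcd(r, d) = 1` this forces
`dⁿ ∣ m`.
-/

section Ultrametric

variable {K : Type*} [NormedField K] [IsUltrametricDist K]

theorem Polynomial.eval_ne_zero_of_norm_term_lt {P : K[X]} {x : K} {k : ℕ}
    (h : ∀ i ≠ k, ‖P.coeff i * x ^ i‖ < ‖P.coeff k * x ^ k‖) : P.eval x ≠ 0 := by
  set n := max P.natDegree k + 1
  have hk : k ∈ Finset.range n := Finset.mem_range.2 (by omega)
  have hrest : ‖∑ i ∈ (Finset.range n).erase k, P.coeff i * x ^ i‖ < ‖P.coeff k * x ^ k‖ := by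
    obtain ⟨i, hi, hle⟩ :=
      IsUltrametricDist.exists_norm_finsetSum_le ((Finset.range n).erase k)
        (fun i => P.coeff i * x ^ i)
    rcases ((Finset.range n).erase k).eq_empty_or_nonempty with he | hne
    · rw [he, Finset.sum_empty, norm_zero]
      exact (norm_nonneg _).trans_lt (h (k + 1) (by omega))
    · exact hle.trans_lt (h i (Finset.ne_of_mem_erase (hi hne)))
  rw [eval_eq_sum_range' (by omega : P.natDegree < n), ← Finset.add_sum_erase _ _ hk]
  intro h0
  rw [add_eq_zero_iff_eq_neg] at h0
  rw [h0, norm_neg] at hrest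
  exact lt_irrefl _ hrest

theorem Polynomial.norm_eq_of_isRoot {P : K[X]} {ρ : ℝ} (hρ : 0 < ρ) (h0 : P.coeff 0 ≠ 0)
    (hbound : ∀ i, ‖P.coeff i‖ * ρ ^ i ≤ ‖P.coeff 0‖)
    (hlead : ‖P.leadingCoeff‖ * ρ ^ P.natDegree = ‖P.coeff 0‖) {x : K} (hx : P.IsRoot x) :
    ‖x‖ = ρ := by
  have hP0 : 0 < ‖P.coeff 0‖ := norm_pos_iff.2 h0
  rcases lt_trichotomy ‖x‖ ρ with hlt | heq | hgt
  · refine absurd hx (eval_ne_zero_of_norm_term_lt (k := 0) fun i hi => ?_)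
    rw [pow_zero, mul_one, norm_mul, norm_pow]
    rcases eq_or_ne (P.coeff i) 0 with hc | hc
    · simpa [hc] using hP0
    calc ‖P.coeff i‖ * ‖x‖ ^ i < ‖P.coeff i‖ * ρ ^ i := by gcongr
      _ ≤ ‖P.coeff 0‖ := hbound i
  · exact heq
  · have hx0 : 0 < ‖x‖ := hρ.trans hgt
    have hlead0 : 0 < ‖P.leadingCoeff‖ := by
      refine norm_pos_iff.2 (leadingCoeff_ne_zero.2 ?_)
      rintro rfl
      exact h0 (coeff_zero 0)
    refine absurd hx (eval_ne_zero_of_norm_term_lt (k := P.natDegree) fun i hi => ?_)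
    rw [norm_mul, norm_mul, norm_pow, norm_pow, coeff_natDegree]
    rcases eq_or_ne (P.coeff i) 0 with hc | hc
    · simp only [hc, norm_zero, zero_mul]
      positivity
    have hi : i < P.natDegree := (le_natDegree_of_ne_zero hc).lt_of_ne hi
    have hρi := hbound i
    rw [← hlead] at hρi
    have key : ‖P.coeff i‖ * ‖x‖ ^ i * ρ ^ P.natDegree
        < ‖P.leadingCoeff‖ * ‖x‖ ^ P.natDegree * ρ ^ P.natDegree := by
      calc ‖P.coeff i‖ * ‖x‖ ^ i * ρ ^ P.natDegree
          = ‖P.coeff i‖ * ρ ^ i * (‖x‖ ^ i * ρ ^ (P.natDegree - i)) := by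
            rw [← pow_sub_mul_pow ρ hi.le]; ring
        _ < ‖P.leadingCoeff‖ * ρ ^ P.natDegree * (‖x‖ ^ i * ‖x‖ ^ (P.natDegree - i)) := by
            refine mul_lt_mul' hρi (mul_lt_mul_of_pos_left ?_ (by positivity)) (by positivity)
              (by positivity)
            exact pow_lt_pow_left₀ hgt hρ.le (by omega)
        _ = ‖P.leadingCoeff‖ * ‖x‖ ^ P.natDegree * ρ ^ P.natDegree := by
            rw [← pow_add, Nat.add_sub_cancel' hi.le]; ring
    exact lt_of_mul_lt_mul_right key (by positivity)

end Ultrametric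

section Padic

variable {p : ℕ} [Fact p.Prime]

theorem PadicAlgCl.norm_algebraMap_rat {q : ℚ} (hq : q ≠ 0) :
    ‖algebraMap ℚ (PadicAlgCl p) q‖ = (p : ℝ) ^ (-padicValRat p q) := by
  rw [IsScalarTower.algebraMap_apply ℚ ℚ_[p], PadicAlgCl.norm_extends, eq_ratCast,
    Padic.eq_padicNorm, padicNorm.eq_zpow_of_nonzero hq]
  push_cast
  rfl

theorem Polynomial.Monic.dvd_mul_natDegree_of_dvd {F q : ℚ[X]} {N r : ℕ} (hN : N ≠ 0)
    (hroots : ∀ x : PadicAlgCl p, aeval x F = 0 → ‖x‖ ^ N = (p : ℝ) ^ (-(r : ℤ)))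
    (hq : q.Monic) (hdvd : q ∣ F) : N ∣ r * q.natDegree := by
  set Q := q.map (algebraMap ℚ (PadicAlgCl p))
  have hQ : Q.Monic := hq.map _
  have hnorm : ‖Q.coeff 0‖ ^ N = ((p : ℝ) ^ (-(r : ℤ))) ^ q.natDegree := by
    have hroot : ∀ x ∈ Q.roots, ‖x‖ ^ N = (p : ℝ) ^ (-(r : ℤ)) := fun x hx =>
      hroots x (aeval_eq_zero_of_dvd_aeval_eq_zero hdvd
        (by simpa [Q, aeval_def, eval_map] using (mem_roots hQ.ne_zero).1 hx))
    have hprod : ‖Q.roots.prod‖ = (Q.roots.map (‖·‖)).prod :=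
      map_multiset_prod (normHom : PadicAlgCl p →*₀ ℝ) _
    rw [(IsAlgClosed.splits Q).coeff_zero_eq_leadingCoeff_mul_prod_roots, hQ.leadingCoeff,
      norm_mul, norm_mul, norm_pow, norm_neg, norm_one, one_pow, one_mul, one_mul,
      hprod, ← Multiset.prod_map_pow, Multiset.map_congr rfl hroot, Multiset.map_const',
      Multiset.prod_replicate, IsAlgClosed.card_roots_eq_natDegree, hq.natDegree_map]
  have hq0 : q.coeff 0 ≠ 0 := by
    intro h0
    rw [coeff_map, h0, map_zero, norm_zero, zero_pow hN] at hnorm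
    exact (pow_pos (zpow_pos (Nat.cast_pos.2 (Fact.out : p.Prime).pos) _) _).ne hnorm
  rw [coeff_map, PadicAlgCl.norm_algebraMap_rat hq0, ← zpow_natCast, ← zpow_natCast,
    ← zpow_mul, ← zpow_mul] at hnorm
  have hval := zpow_right_injective₀ (Nat.cast_pos.2 (Fact.out : p.Prime).pos)
    (Nat.cast_ne_one.2 (Fact.out : p.Prime).ne_one) hnorm
  exact Int.natCast_dvd_natCast.1 ⟨padicValRat p (q.coeff 0), by push_cast; linear_combination hval⟩

theorem Polynomial.irreducible_of_norm_pow_natDegree_eq {F : ℚ[X]} {r : ℕ}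
    (hdeg : 0 < F.natDegree) (hcop : r.Coprime F.natDegree)
    (hroots : ∀ x : PadicAlgCl p, aeval x F = 0 →
      ‖x‖ ^ F.natDegree = (p : ℝ) ^ (-(r : ℤ))) : Irreducible F := by
  have hF0 : F ≠ 0 := ne_zero_of_natDegree_gt hdeg
  have hFu : ¬IsUnit F := fun hu => hdeg.ne' (natDegree_eq_zero_of_isUnit hu)
  rw [irreducible_iff_lt_natDegree_lt hF0 hFu]
  intro q hq hqdeg hdvd
  obtain ⟨hq0, hqN⟩ := Finset.mem_Ioc.1 hqdeg
  have := Nat.le_of_dvd hq0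
    (hcop.symm.dvd_of_dvd_mul_left (hq.dvd_mul_natDegree_of_dvd hdeg.ne' hroots hdvd))
  omega

end Padic

theorem polyIter_succ' {R : Type*} [CommSemiring R] (f : R[X]) (n : ℕ) :
    polyIter f (n + 1) = (polyIter f n).comp f := by
  induction n with
  | zero => simp [polyIter]
  | succ n ih =>
    show f.comp (polyIter f (n + 1)) = (f.comp (polyIter f n)).comp f
    rw [ih, comp_assoc]

theorem natDegree_polyIter {R : Type*} [CommSemiring R] [NoZeroDivisors R] [Nontrivial R]
    (f : R[X]) (n : ℕ) :
    (polyIter f n).natDegree = f.natDegree ^ n := by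
  induction n with
  | zero => simp [polyIter]
  | succ n ih => rw [polyIter, natDegree_comp, ih, pow_succ']

namespace IsDumas

variable {p r : ℕ} [Fact p.Prime] {f : ℚ[X]}

local notation "L" => PadicAlgCl p

theorem norm_coeff_zero (hf : IsDumas p r f) :
    ‖algebraMap ℚ L (f.coeff 0)‖ = (p : ℝ) ^ (-(r : ℤ)) := by
  obtain ⟨-, -, h0, hv0, -, -⟩ := hf
  rw [PadicAlgCl.norm_algebraMap_rat h0, hv0]

theorem norm_leadingCoeff (hf : IsDumas p r f) : ‖algebraMap ℚ L f.leadingCoeff‖ = 1 := by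
  obtain ⟨-, -, h0, -, hvlc, -⟩ := hf
  have hlc : f.leadingCoeff ≠ 0 := leadingCoeff_ne_zero.2 fun h => h0 (by simp [h])
  rw [PadicAlgCl.norm_algebraMap_rat hlc, hvlc, neg_zero, zpow_zero]

theorem norm_coeff_pow_le (hf : IsDumas p r f) {i : ℕ} (hi : i ≤ f.natDegree) :
    ‖algebraMap ℚ L (f.coeff i)‖ ^ f.natDegree ≤ ((p : ℝ) ^ (-(r : ℤ))) ^ (f.natDegree - i) := by
  obtain ⟨hdeg, -, -, -, -, hslope⟩ := hf
  have hp : (1 : ℝ) ≤ p := Nat.one_le_cast.2 (Fact.out : p.Prime).one_le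
  rcases eq_or_ne (f.coeff i) 0 with hc | hc
  · rw [hc, map_zero, norm_zero, zero_pow (by omega)]
    positivity
  have hD : (0 : ℝ) < f.natDegree := Nat.cast_pos.2 hdeg
  have hreal := mul_le_mul_of_nonneg_right (hslope i hi hc) hD.le
  rw [mul_assoc, one_sub_mul, div_mul_cancel₀ _ hD.ne'] at hreal
  have hint : (r : ℤ) * (f.natDegree - i : ℕ) ≤ padicValRat p (f.coeff i) * f.natDegree := by
    rw [Nat.cast_sub hi]
    exact_mod_cast hreal
  rw [PadicAlgCl.norm_algebraMap_rat hc, ← zpow_natCast, ← zpow_natCast, ← zpow_mul, ← zpow_mul]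
  exact zpow_le_zpow_right₀ hp (by linarith)

/-- If `f(x) = α` and `‖f(0) - α‖ ≥ ‖f(0)‖`, the Newton polygon of `f - α` is still a single
segment, ending at height `‖f(0) - α‖`. -/
theorem norm_pow_natDegree_eq_of_aeval_eq (hf : IsDumas p r f) {x α : L} (hx : aeval x f = α)
    (hα : (p : ℝ) ^ (-(r : ℤ)) ≤ ‖algebraMap ℚ L (f.coeff 0) - α‖) :
    ‖x‖ ^ f.natDegree = ‖algebraMap ℚ L (f.coeff 0) - α‖ := by
  set D := f.natDegree
  set s := ‖algebraMap ℚ L (f.coeff 0) - α‖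
  have hD : D ≠ 0 := by have := hf.1; omega
  have hs : 0 < s :=
    (zpow_pos (Nat.cast_pos.2 (Fact.out : p.Prime).pos) _).trans_le hα
  set ρ := s ^ ((D : ℝ)⁻¹)
  have hρ : 0 < ρ := Real.rpow_pos_of_pos hs _
  have hρD : ρ ^ D = s := Real.rpow_inv_natCast_pow hs.le hD
  set P := f.map (algebraMap ℚ L) - C α
  have hcoeff : ∀ i ≠ 0, P.coeff i = algebraMap ℚ L (f.coeff i) := fun i hi => by
    simp [P, coeff_C, hi]
  have hP0 : P.coeff 0 = algebraMap ℚ L (f.coeff 0) - α := by simp [P]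
  have hPdeg : P.natDegree = D := by rw [natDegree_sub_C, natDegree_map]
  have hbound : ∀ i, ‖P.coeff i‖ * ρ ^ i ≤ ‖P.coeff 0‖ := by
    intro i
    rcases eq_or_ne i 0 with rfl | hi0
    · rw [pow_zero, mul_one]
    rw [hP0, hcoeff i hi0]
    rcases le_or_gt i D with hi | hi
    · have hle : ‖algebraMap ℚ L (f.coeff i)‖ ≤ ρ ^ (D - i) := by
        rw [← pow_le_pow_iff_left₀ (norm_nonneg _) (by positivity) hD, ← pow_mul, mul_comm,
          pow_mul, hρD]
        exact (hf.norm_coeff_pow_le hi).trans (pow_le_pow_left₀ (by positivity) hα _)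
      calc ‖algebraMap ℚ L (f.coeff i)‖ * ρ ^ i ≤ ρ ^ (D - i) * ρ ^ i := by gcongr
        _ = s := by rw [← pow_add, Nat.sub_add_cancel hi, hρD]
    · rw [coeff_eq_zero_of_natDegree_lt hi, map_zero, norm_zero, zero_mul]
      exact hs.le
  have hlead : ‖P.leadingCoeff‖ * ρ ^ P.natDegree = ‖P.coeff 0‖ := by
    rw [leadingCoeff, hPdeg, hcoeff D hD, coeff_natDegree, hf.norm_leadingCoeff, one_mul, hρD,
      hP0]
  have hroot : P.IsRoot x := by simp [P, ← hx, aeval_def, eval_map]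
  rw [norm_eq_of_isRoot hρ (by rw [hP0]; exact norm_pos_iff.1 hs) hbound hlead hroot, hρD]

theorem norm_pow_eq_of_aeval_polyIter_eq_zero (hf : IsDumas p r f) (hD : 2 ≤ f.natDegree)
    (n : ℕ) {x : L} (hx : aeval x (polyIter f (n + 1)) = 0) :
    ‖x‖ ^ f.natDegree ^ (n + 1) = (p : ℝ) ^ (-(r : ℤ)) := by
  induction n generalizing x with
  | zero =>
    rw [polyIter, polyIter, comp_X] at hx
    rw [pow_one, hf.norm_pow_natDegree_eq_of_aeval_eq hx (by rw [sub_zero, hf.norm_coeff_zero]),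
      sub_zero, hf.norm_coeff_zero]
  | succ n ih =>
    rw [polyIter_succ', aeval_comp] at hx
    set α := aeval x f
    have hαpow := ih hx
    have hr : r ≠ 0 := by
      rintro rfl
      have := (Nat.coprime_zero_left _).1 hf.2.1
      omega
    have hc1 : (p : ℝ) ^ (-(r : ℤ)) < 1 :=
      zpow_lt_one_of_neg₀ (Nat.one_lt_cast.2 (Fact.out : p.Prime).one_lt) (by omega)
    have hα0 : 0 < ‖α‖ := norm_pos_iff.2 fun h0 => by
      rw [h0, norm_zero, zero_pow (by positivity)] at hαpow
      exact (zpow_pos (Nat.cast_pos.2 (Fact.out : p.Prime).pos) _).ne hαpow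
    have hα1 : ‖α‖ < 1 :=
      (pow_lt_one_iff_of_nonneg (norm_nonneg _) (by positivity)).1 (hαpow ▸ hc1)
    have hlt : ‖algebraMap ℚ L (f.coeff 0)‖ < ‖α‖ := by
      rw [hf.norm_coeff_zero, ← hαpow]
      exact pow_lt_self_of_lt_one₀ hα0 hα1 (Nat.one_lt_pow (by omega) (by omega))
    have hsub : ‖algebraMap ℚ L (f.coeff 0) - α‖ = ‖α‖ := by
      rw [sub_eq_add_neg, IsUltrametricDist.norm_add_eq_max_of_norm_ne_norm (by
        rw [norm_neg]; exact hlt.ne), norm_neg, max_eq_right hlt.le]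
    have hxα := hf.norm_pow_natDegree_eq_of_aeval_eq rfl
      (by rw [hsub, ← hf.norm_coeff_zero]; exact hlt.le)
    rw [pow_succ' f.natDegree, pow_mul, hxα, hsub, hαpow]

end IsDumas

theorem dumas_dynamically_irreducible_general (p r : ℕ) (hp : p.Prime)
    (f : Polynomial ℚ) (hf : IsDumas p r f) :
    ∀ n : ℕ, 1 ≤ n → Irreducible (polyIter f n) := by
  have : Fact p.Prime := ⟨hp⟩
  intro n hn
  obtain ⟨m, rfl⟩ := Nat.exists_eq_add_of_le' hn
  rcases hf.1.eq_or_lt with hD | hD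
  · refine irreducible_of_degree_eq_one ((degree_eq_iff_natDegree_eq_of_pos one_pos).2 ?_)
    rw [natDegree_polyIter, ← hD, one_pow]
  · refine irreducible_of_norm_pow_natDegree_eq (p := p) (r := r) ?_ ?_ fun x hx => ?_
    · rw [natDegree_polyIter]
      exact pow_pos (by omega) _
    · rw [natDegree_polyIter]
      exact hf.2.1.pow_right _
    · rw [natDegree_polyIter]
      exact hf.norm_pow_eq_of_aeval_polyIter_eq_zero hD m hx

/-- If `f ∈ ℚ[x]` is `p^r`-Dumas, then `f` is dynamically irreducible: every iterate
`f^{∘n}` with `n ≥ 1` is irreducible over `ℚ`. -/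
theorem dumas_dynamically_irreducible (p r : ℕ) (hp : p.Prime) (hr : 1 ≤ r)
    (f : Polynomial ℚ) (hf : IsDumas p r f) :
    ∀ n : ℕ, 1 ≤ n → Irreducible (polyIter f n) :=
  dumas_dynamically_irreducible_general p r hp f hf
end

section
/- Every Eisenstein polynomial at p is dynamically irreducible: if f ∈ ℤ[x] is monic with all non-leading coefficients divisible by p and constant coefficient not divisible by p², then f^{∘n} is irreducible over ℚ for every n ≥ 1. -/
open Polynomial

lemma polyIter_monic_natDegree {f : Polynomial ℤ} (hmonic : f.Monic) (hd : 2 ≤ f.natDegree)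
    (n : ℕ) : (polyIter f n).Monic ∧ (polyIter f n).natDegree = f.natDegree ^ n := by
  induction n with
  | zero => exact ⟨monic_X, by simp [polyIter]⟩
  | succ n ih =>
    obtain ⟨hm, hdeg⟩ := ih
    have hne : (polyIter f n).natDegree ≠ 0 := by
      rw [hdeg]; positivity
    refine ⟨hmonic.comp hm hne, ?_⟩
    rw [polyIter, natDegree_comp, hdeg, pow_succ, mul_comm]


/-- Eisenstein polynomials are dynamically irreducible: if `f ∈ ℤ[x]` is monic, all
non-leading coefficients are divisible by `p`, and `p² ∤ f(0)`, then every iterate of `f`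
is irreducible over `ℚ`. -/
theorem eisenstein_dynamically_irreducible (p : ℕ) (hp : p.Prime)
    (f : Polynomial ℤ) (hmonic : f.Monic) (hd : 2 ≤ f.natDegree)
    (hdvd : ∀ i < f.natDegree, (p : ℤ) ∣ f.coeff i)
    (hnd : ¬ ((p : ℤ) ^ 2 ∣ f.coeff 0)) :
    ∀ n : ℕ, 1 ≤ n → Irreducible ((polyIter f n).map (Int.castRingHom ℚ)) := by
  have hp' : Prime (p : ℤ) := Nat.prime_iff_prime_int.1 hp
  have hppos : 0 < f.natDegree := by omega
  -- map mod p is X^d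
  have hmapf : f.map (Int.castRingHom (ZMod p)) = X ^ f.natDegree := by
    ext i
    rw [coeff_map, coeff_X_pow]
    rcases lt_trichotomy i f.natDegree with h | h | h
    · simp only [if_neg h.ne]
      exact (ZMod.intCast_zmod_eq_zero_iff_dvd _ _).2 (by exact_mod_cast hdvd i h)
    · subst h; simp [hmonic.coeff_natDegree]
    · simp [if_neg h.ne', coeff_eq_zero_of_natDegree_lt h]
  have hmapiter : ∀ n, (polyIter f n).map (Int.castRingHom (ZMod p)) = X ^ (f.natDegree ^ n) := by
    intro n
    induction n with
    | zero => simp [polyIter]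
    | succ n ih =>
      rw [polyIter, map_comp, hmapf, ih, X_pow_comp, ← pow_mul, pow_succ]
  -- divisibility of lower coefficients
  have hcoeffdvd : ∀ n, ∀ i < f.natDegree ^ n, (p : ℤ) ∣ (polyIter f n).coeff i := by
    intro n i hi
    rw [← ZMod.intCast_zmod_eq_zero_iff_dvd]
    have := congrArg (fun g => Polynomial.coeff g i) (hmapiter n)
    simpa [coeff_X_pow, if_neg hi.ne] using this
  -- eval at 0
  have key : ∀ t : ℤ, (p : ℤ) ∣ t → (p : ℤ) ^ 2 ∣ f.eval t - f.coeff 0 := by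
    intro t ht
    rw [eval_eq_sum_range, Finset.sum_range_succ']
    simp only [pow_zero, mul_one, add_sub_cancel_right]
    apply Finset.dvd_sum
    intro i hi
    rcases lt_or_ge (i + 1) f.natDegree with h | h
    · have h1 : (p : ℤ) ∣ f.coeff (i + 1) := hdvd _ h
      have h2 : (p : ℤ) ∣ t ^ (i + 1) := dvd_pow ht (Nat.succ_ne_zero i)
      calc ((p:ℤ))^2 = p * p := sq (p:ℤ)
        _ ∣ f.coeff (i + 1) * t ^ (i + 1) := mul_dvd_mul h1 h2
    · have h2 : (p : ℤ) ^ 2 ∣ t ^ (i + 1) := by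
        have : (p : ℤ) ^ 2 ∣ t ^ 2 := pow_dvd_pow_of_dvd ht 2
        exact this.trans (pow_dvd_pow t (by omega))
      exact Dvd.dvd.mul_left h2 _
  have hc : ∀ n, 1 ≤ n → (p : ℤ) ∣ (polyIter f n).eval 0 ∧ ¬ ((p : ℤ) ^ 2 ∣ (polyIter f n).eval 0) := by
    intro n hn
    induction n with
    | zero => omega
    | succ n ih =>
      rcases Nat.eq_or_lt_of_le hn with h | h
      · have : polyIter f 1 = f := by simp [polyIter]
        rw [show n = 0 by omega, this, ← coeff_zero_eq_eval_zero]
        exact ⟨hdvd 0 hppos, hnd⟩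
      · obtain ⟨h1, h2⟩ := ih (by omega)
        have heval : (polyIter f (n+1)).eval 0 = f.eval ((polyIter f n).eval 0) := by
          rw [polyIter, eval_comp]
        have hk := key _ h1
        constructor
        · rw [heval]
          have : (p : ℤ) ∣ f.coeff 0 := hdvd 0 hppos
          have := dvd_add ((dvd_pow_self (p:ℤ) two_ne_zero).trans hk) this
          simpa using this
        · rw [heval]
          intro hcon
          exact hnd (by simpa using dvd_sub hcon hk)
  -- Eisenstein
  intro n hn
  obtain ⟨hm, hdeg⟩ := polyIter_monic_natDegree hmonic hd n
  have hdegpos : 0 < (polyIter f n).natDegree := by rw [hdeg]; positivity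
  have heis : (polyIter f n).IsEisensteinAt (Ideal.span {(p : ℤ)}) := by
    constructor
    · rw [hm.leadingCoeff, Ideal.mem_span_singleton]
      exact fun h => hp'.not_unit (isUnit_of_dvd_one h)
    · intro i hi
      rw [Ideal.mem_span_singleton]
      exact hcoeffdvd n i (hdeg ▸ hi)
    · rw [Ideal.span_singleton_pow, Ideal.mem_span_singleton, coeff_zero_eq_eval_zero]
      exact (hc n hn).2
  have hirr : Irreducible (polyIter f n) :=
    heis.irreducible ((Ideal.span_singleton_prime hp'.ne_zero).2 hp') hm.isPrimitive hdegpos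
  have := (hm.irreducible_iff_irreducible_map_fraction_map (K := ℚ)).1 hirr
  simpa [algebraMap_int_eq] using this
end

section
/- Let f ∈ ℚ_p[x] be pure of slope s = −m/n (with n = deg f, m = ord_p f(0)) with |s| < r, let g ∈ ℤ_p[x] be p^r-pure of degree d with constant coefficient b_0, and suppose f is monic with coefficients a_i. Then ord_p(Σ_{i=1}^n a_i b_0^i) > m, and hence the constant coefficient c_0 = f(g(0)) of f ∘ g satisfies ord_p(c_0) = m. -/
open Polynomial

/-! If `ord_p b₀ = r > -s`, then `ord_p (a_i b₀^i) ≥ m + i (s + r) > m` for every `i ≥ 1`, so the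
ultrametric inequality bounds the whole sum `Σ_{i ≥ 1} a_i b₀^i` strictly above `m = ord_p a₀`;
hence adding it to `a₀` gives `c₀ = f(b₀)` of valuation exactly `m`. -/

theorem Polynomial.coeff_zero_comp {R : Type*} [CommSemiring R] (f g : R[X]) :
    (f.comp g).coeff 0 = f.coeff 0 + ∑ i ∈ Finset.Icc 1 f.natDegree, f.coeff i * g.coeff 0 ^ i := by
  rw [coeff_zero_eq_eval_zero, eval_comp, ← coeff_zero_eq_eval_zero, eval_eq_sum_range,
    Finset.range_eq_Ico, Finset.Ico_add_one_right_eq_Icc,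
    ← Finset.add_sum_Ioc_eq_sum_Icc f.natDegree.zero_le, ← Finset.Icc_add_one_left_eq_Ioc,
    zero_add, pow_zero, mul_one]

section ordp

variable {p : ℕ} [Fact p.Prime]

theorem ordp_of_ne_zero {x : ℚ_[p]} (hx : x ≠ 0) : ordp p x = ((x.valuation : ℝ) : EReal) :=
  if_neg hx

theorem coe_lt_ordp_iff_s17 {m : ℤ} {x : ℚ_[p]} :
    ((m : ℝ) : EReal) < ordp p x ↔ (m : WithTop ℤ) < Padic.addValuation x := by
  rcases eq_or_ne x 0 with rfl | hx
  · simp [ordp]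
  · rw [ordp_of_ne_zero hx, Padic.addValuation.apply hx, EReal.coe_lt_coe_iff, Int.cast_lt,
      WithTop.coe_lt_coe]

theorem ordp_eq_coe_iff_s17 {m : ℤ} {x : ℚ_[p]} :
    ordp p x = ((m : ℝ) : EReal) ↔ Padic.addValuation x = m := by
  rcases eq_or_ne x 0 with rfl | hx
  · simp [ordp]
  · rw [ordp_of_ne_zero hx, Padic.addValuation.apply hx, EReal.coe_eq_coe_iff, Int.cast_inj,
      WithTop.coe_inj]

end ordp

namespace IsPure

variable {p : ℕ} [Fact p.Prime] {f : ℚ_[p][X]} {s : ℝ}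

theorem lt_addValuation_coeff_mul_pow (hf : IsPure f s) {b : ℚ_[p]} (hb : -(b.valuation : ℝ) < s)
    {i : ℕ} (hi : 1 ≤ i) (hin : i ≤ f.natDegree) :
    ((f.coeff 0).valuation : WithTop ℤ) < Padic.addValuation (f.coeff i * b ^ i) := by
  rcases eq_or_ne (f.coeff i * b ^ i) 0 with h | h
  · simp [h]
  obtain ⟨hai, hbi⟩ := mul_ne_zero_iff.mp h
  have hcoeff : ((f.coeff 0).valuation : ℝ) + s * i ≤ (f.coeff i).valuation := by
    simpa only [ordp_of_ne_zero hai, EReal.coe_le_coe_iff] using hf.2.1 i hin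
  rw [Padic.addValuation.apply h, WithTop.coe_lt_coe, Padic.valuation_mul hai hbi,
    Padic.valuation_pow, ← Int.cast_lt (R := ℝ)]
  push_cast
  have : (0 : ℝ) < i * (s + b.valuation) := mul_pos (Nat.cast_pos.mpr hi) (by linarith)
  linarith

theorem lt_addValuation_sum_coeff_mul_pow (hf : IsPure f s) {b : ℚ_[p]}
    (hb : -(b.valuation : ℝ) < s) :
    ((f.coeff 0).valuation : WithTop ℤ)
      < Padic.addValuation (∑ i ∈ Finset.Icc 1 f.natDegree, f.coeff i * b ^ i) :=
  AddValuation.map_lt_sum _ WithTop.coe_ne_top fun _ hi ↦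
    hf.lt_addValuation_coeff_mul_pow hb (Finset.mem_Icc.mp hi).1 (Finset.mem_Icc.mp hi).2

end IsPure

theorem comp_constant_coeff_valuation_general (p : ℕ) [Fact p.Prime] (r : ℕ)
    (f g : Polynomial ℚ_[p])
    (hpure : IsPure f (-((f.coeff 0).valuation : ℝ) / (f.natDegree : ℝ)))
    (hs : |(-((f.coeff 0).valuation : ℝ) / (f.natDegree : ℝ))| < r)
    (hg : IsPrPure g r) :
    ((((f.coeff 0).valuation : ℝ)) : EReal)
        < ordp p (∑ i ∈ Finset.Icc 1 f.natDegree, f.coeff i * (g.coeff 0) ^ i) ∧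
      ordp p ((f.comp g).coeff 0) = ((((f.coeff 0).valuation : ℝ)) : EReal) := by
  obtain ⟨-, hb, -⟩ := hg
  have hsum := hpure.lt_addValuation_sum_coeff_mul_pow (b := g.coeff 0)
    (by rw [hb]; exact (abs_lt.mp hs).1)
  refine ⟨coe_lt_ordp_iff_s17.mpr hsum, ordp_eq_coe_iff_s17.mpr ?_⟩
  have ha₀ := Padic.addValuation.apply hpure.1
  rw [Polynomial.coeff_zero_comp, AddValuation.map_add_eq_of_lt_left _ (ha₀ ▸ hsum), ha₀]

/-- Let `f` be monic and pure of slope `s = -m/n` (`n = deg f`, `m = ord_p f(0)`) with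
`|s| < r`, and let `g ∈ ℤ_p[x]` be `p^r`-pure with constant coefficient `b_0`. Then
`ord_p (Σ_{i=1}^n a_i b_0^i) > m`, and hence the constant coefficient `c_0 = f(g(0))` of
`f ∘ g` satisfies `ord_p c_0 = m`. -/
theorem comp_constant_coeff_valuation (p : ℕ) [Fact p.Prime] (r : ℕ) (hr : 1 ≤ r)
    (f g : Polynomial ℚ_[p]) (hmonic : f.Monic) (hn : 1 ≤ f.natDegree)
    (hpure : IsPure f (-((f.coeff 0).valuation : ℝ) / (f.natDegree : ℝ)))
    (hs : |(-((f.coeff 0).valuation : ℝ) / (f.natDegree : ℝ))| < r)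
    (hgint : ∀ i, ‖g.coeff i‖ ≤ 1) (hg : IsPrPure g r) :
    ((((f.coeff 0).valuation : ℝ)) : EReal)
        < ordp p (∑ i ∈ Finset.Icc 1 f.natDegree, f.coeff i * (g.coeff 0) ^ i) ∧
      ordp p ((f.comp g).coeff 0) = ((((f.coeff 0).valuation : ℝ)) : EReal) :=
  comp_constant_coeff_valuation_general p r f g hpure hs hg
end
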